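/- Let F be a convex set of functions (viewed as a convex subset of R^n via evaluation at fixed design points), and for f ∈ F and t ≥ 0 let W(f,t) be the Gaussian width of the ball B(f,t) = {g ∈ F : ||g - f||_n ≤ t}. Then the map t ↦ W(f,t)/t is nonincreasing on (0, ∞). -/

import Mathlib

open MeasureTheory

/-- The empirical `L²` norm `‖f‖_n = √((1/n) Σᵢ f(Xᵢ)²)` of a vector of evaluations. -/
noncomputable def empNorm (n : ℕ) (f : Fin n → ℝ) : ℝ :=
  Real.sqrt ((n : ℝ)⁻¹ * ∑ i, (f i) ^ 2)

/-- The Gaussian width `W(G) = E sup_{g ∈ G} (1/n) Σᵢ ξᵢ gᵢ` of a set `G ⊆ ℝⁿ`,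
where `ξ₁, …, ξₙ` are i.i.d. standard Gaussians. -/
noncomputable def gaussWidth (n : ℕ) (G : Set (Fin n → ℝ)) : ℝ :=
  ∫ ξ : Fin n → ℝ, sSup ((fun g => (n : ℝ)⁻¹ * ∑ i, ξ i * g i) '' G)
    ∂(Measure.pi fun _ : Fin n => ProbabilityTheory.gaussianReal 0 1)

/-- The empirical ball of radius `t` around `f` inside the class `F`. -/
def empBall (n : ℕ) (F : Set (Fin n → ℝ)) (f : Fin n → ℝ) (t : ℝ) : Set (Fin n → ℝ) :=
  {g ∈ F | empNorm n (g - f) ≤ t}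

/-! For `g ∈ B(f,t)` the point `f + (s/t) • (g - f)` lies in `B(f,s)` by convexity, so the support
functions of the two balls satisfy `s (h_{B(f,t)}(ξ) - ⟨ξ,f⟩) ≤ t (h_{B(f,s)}(ξ) - ⟨ξ,f⟩)` for
every `ξ`. The Gaussian width is `n⁻¹` times the expected support function, and taking
expectations kills the centred linear term `⟨ξ,f⟩`. -/

open ProbabilityTheory Bornology Matrix Set

noncomputable def supportFun {n : ℕ} (G : Set (Fin n → ℝ)) (ξ : Fin n → ℝ) : ℝ :=
  sSup ((ξ ⬝ᵥ ·) '' G)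

section SupportFunction

variable {n : ℕ} {G : Set (Fin n → ℝ)}

lemma abs_dotProduct_le_norm_mul_sum_abs (ξ g : Fin n → ℝ) :
    |ξ ⬝ᵥ g| ≤ ‖g‖ * ∑ i, |ξ i| := by
  rw [Finset.mul_sum]
  refine (Finset.abs_sum_le_sum_abs _ _).trans (Finset.sum_le_sum fun i _ => ?_)
  rw [abs_mul, mul_comm]
  exact mul_le_mul_of_nonneg_right (norm_le_pi_norm g i) (abs_nonneg _)

lemma bddAbove_image_dotProduct (hG : IsBounded G) (ξ : Fin n → ℝ) :
    BddAbove ((ξ ⬝ᵥ ·) '' G) := by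
  obtain ⟨C, hC⟩ := isBounded_iff_forall_norm_le.1 hG
  refine ⟨C * ∑ i, |ξ i|, forall_mem_image.2 fun g hg => ?_⟩
  exact (le_abs_self _).trans ((abs_dotProduct_le_norm_mul_sum_abs ξ g).trans
    (mul_le_mul_of_nonneg_right (hC g hg) (by positivity)))

lemma dotProduct_le_supportFun (hG : IsBounded G) {g : Fin n → ℝ} (hg : g ∈ G)
    (ξ : Fin n → ℝ) : ξ ⬝ᵥ g ≤ supportFun G ξ :=
  le_csSup (bddAbove_image_dotProduct hG ξ) (mem_image_of_mem _ hg)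

lemma abs_supportFun_le {C : ℝ} (hC : ∀ g ∈ G, ‖g‖ ≤ C) (hne : G.Nonempty)
    (ξ : Fin n → ℝ) : |supportFun G ξ| ≤ C * ∑ i, |ξ i| := by
  have hG : IsBounded G := isBounded_iff_forall_norm_le.2 ⟨C, hC⟩
  have hdot : ∀ g ∈ G, |ξ ⬝ᵥ g| ≤ C * ∑ i, |ξ i| := fun g hg =>
    (abs_dotProduct_le_norm_mul_sum_abs ξ g).trans
      (mul_le_mul_of_nonneg_right (hC g hg) (by positivity))
  obtain ⟨g₀, hg₀⟩ := hne
  refine abs_le.2 ⟨?_, csSup_le ⟨_, mem_image_of_mem _ hg₀⟩ (forall_mem_image.2 fun g hg => ?_)⟩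
  · exact (neg_le_of_abs_le (hdot g₀ hg₀)).trans (dotProduct_le_supportFun hG hg₀ ξ)
  · exact le_of_abs_le (hdot g hg)

lemma measurable_supportFun (hG : IsBounded G) : Measurable (supportFun G) := by
  have hiSup : supportFun G = fun ξ => ⨆ g : G, ξ ⬝ᵥ (g : Fin n → ℝ) := by
    funext ξ; rw [supportFun, sSup_image']
  rw [hiSup]
  refine (lowerSemicontinuous_ciSup (fun ξ => ?_) fun g => ?_).measurable
  · rw [← image_eq_range (ξ ⬝ᵥ ·)]
    exact bddAbove_image_dotProduct hG ξ
  · exact (continuous_id.dotProduct continuous_const).lowerSemicontinuous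

lemma integrable_supportFun {μ : Measure (Fin n → ℝ)}
    (hμ : ∀ i, Integrable (fun ξ : Fin n → ℝ => ξ i) μ) (hG : IsBounded G) (hne : G.Nonempty) :
    Integrable (supportFun G) μ := by
  obtain ⟨C, hC⟩ := isBounded_iff_forall_norm_le.1 hG
  have hdom : Integrable (fun ξ : Fin n → ℝ => C * ∑ i, |ξ i|) μ :=
    (integrable_finsetSum _ fun i _ => (hμ i).abs).const_mul C
  exact hdom.mono' (measurable_supportFun hG).aestronglyMeasurable
    (ae_of_all _ (abs_supportFun_le hC hne))

end SupportFunction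

section EmpiricalBall

variable {n : ℕ} {F : Set (Fin n → ℝ)} {f g : Fin n → ℝ} {r t : ℝ}

lemma empNorm_smul (c : ℝ) (v : Fin n → ℝ) : empNorm n (c • v) = |c| * empNorm n v := by
  simp only [empNorm, Pi.smul_apply, smul_eq_mul, mul_pow, ← Finset.mul_sum]
  rw [mul_left_comm, Real.sqrt_mul (sq_nonneg c), Real.sqrt_sq_eq_abs]

lemma norm_le_sqrt_mul_empNorm (v : Fin n → ℝ) : ‖v‖ ≤ √n * empNorm n v := by
  refine (pi_norm_le_iff_of_nonneg (by unfold empNorm; positivity)).2 fun i => ?_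
  have hn : (n : ℝ) ≠ 0 := Nat.cast_ne_zero.2 (Fin.pos i).ne'
  rw [empNorm, ← Real.sqrt_mul (Nat.cast_nonneg n), mul_inv_cancel_left₀ hn, Real.norm_eq_abs]
  exact Real.abs_le_sqrt (Finset.single_le_sum (fun j _ => sq_nonneg (v j)) (Finset.mem_univ i))

lemma self_mem_empBall (hf : f ∈ F) (hr : 0 ≤ r) : f ∈ empBall n F f r :=
  ⟨hf, by simpa [empNorm] using hr⟩

lemma isBounded_empBall : IsBounded (empBall n F f r) := by
  refine (Metric.isBounded_closedBall (x := f) (r := √n * r)).subset fun g hg => ?_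
  rw [Metric.mem_closedBall, dist_eq_norm]
  exact (norm_le_sqrt_mul_empNorm _).trans (mul_le_mul_of_nonneg_left hg.2 (by positivity))

lemma add_smul_sub_mem_empBall (hF : Convex ℝ F) (hf : f ∈ F) (hg : g ∈ empBall n F f t)
    {c : ℝ} (hc₀ : 0 ≤ c) (hc₁ : c ≤ 1) : f + c • (g - f) ∈ empBall n F f (c * t) := by
  refine ⟨hF.add_smul_sub_mem hf hg.1 ⟨hc₀, hc₁⟩, ?_⟩
  rw [add_sub_cancel_left, empNorm_smul, abs_of_nonneg hc₀]
  exact mul_le_mul_of_nonneg_left hg.2 hc₀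

end EmpiricalBall

section Rescaling

variable {n : ℕ} {F : Set (Fin n → ℝ)} {f : Fin n → ℝ} {s t : ℝ}

lemma mul_supportFun_empBall_sub_le (hF : Convex ℝ F) (hf : f ∈ F) (hs : 0 < s) (hst : s ≤ t)
    (ξ : Fin n → ℝ) :
    s * (supportFun (empBall n F f t) ξ - ξ ⬝ᵥ f)
      ≤ t * (supportFun (empBall n F f s) ξ - ξ ⬝ᵥ f) := by
  have ht : 0 < t := hs.trans_le hst
  have hbound : ∀ g ∈ empBall n F f t,
      ξ ⬝ᵥ g ≤ ξ ⬝ᵥ f + t / s * (supportFun (empBall n F f s) ξ - ξ ⬝ᵥ f) := by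
    intro g hg
    have hmem := add_smul_sub_mem_empBall hF hf hg (div_nonneg hs.le ht.le)
      (div_le_one_of_le₀ hst ht.le)
    rw [div_mul_cancel₀ s ht.ne'] at hmem
    have hle := dotProduct_le_supportFun isBounded_empBall hmem ξ
    rw [dotProduct_add, dotProduct_smul, dotProduct_sub, smul_eq_mul] at hle
    have hscaled := mul_le_mul_of_nonneg_left hle ht.le
    rw [mul_add, ← mul_assoc, mul_div_cancel₀ s ht.ne'] at hscaled
    rw [← sub_le_iff_le_add', div_mul_eq_mul_div, le_div_iff₀ hs]
    linarith
  have hsup := csSup_le ⟨_, mem_image_of_mem _ (self_mem_empBall hf ht.le)⟩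
    (forall_mem_image.2 hbound)
  rw [← supportFun, ← sub_le_iff_le_add'] at hsup
  calc s * (supportFun (empBall n F f t) ξ - ξ ⬝ᵥ f)
      ≤ s * (t / s * (supportFun (empBall n F f s) ξ - ξ ⬝ᵥ f)) :=
        mul_le_mul_of_nonneg_left hsup hs.le
    _ = t * (supportFun (empBall n F f s) ξ - ξ ⬝ᵥ f) := by field_simp

lemma integral_supportFun_empBall_div_le {μ : Measure (Fin n → ℝ)}
    (hμ : ∀ i, Integrable (fun ξ : Fin n → ℝ => ξ i) μ) (hμ₀ : ∀ i, ∫ ξ, ξ i ∂μ = 0)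
    (hF : Convex ℝ F) (hf : f ∈ F) (hs : 0 < s) (hst : s ≤ t) :
    (∫ ξ, supportFun (empBall n F f t) ξ ∂μ) / t
      ≤ (∫ ξ, supportFun (empBall n F f s) ξ ∂μ) / s := by
  have ht : 0 < t := hs.trans_le hst
  have hdot : Integrable (fun ξ : Fin n → ℝ => ξ ⬝ᵥ f) μ :=
    integrable_finsetSum _ fun i _ => (hμ i).mul_const (f i)
  have hdot₀ : ∫ ξ, ξ ⬝ᵥ f ∂μ = 0 := by
    simp only [dotProduct]
    rw [integral_finsetSum _ fun i _ => (hμ i).mul_const (f i)]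
    simp [integral_mul_const, hμ₀]
  have hsupp : ∀ r, 0 ≤ r → Integrable (supportFun (empBall n F f r)) μ := fun r hr =>
    integrable_supportFun hμ isBounded_empBall ⟨f, self_mem_empBall hf hr⟩
  have hint := integral_mono (((hsupp t ht.le).sub hdot).const_mul s)
    (((hsupp s hs.le).sub hdot).const_mul t) (mul_supportFun_empBall_sub_le hF hf hs hst)
  simp only [Pi.sub_apply] at hint
  rw [integral_const_mul, integral_const_mul, integral_sub (hsupp t ht.le) hdot,
    integral_sub (hsupp s hs.le) hdot, hdot₀, sub_zero, sub_zero] at hint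
  rw [div_le_div_iff₀ ht hs]
  linarith

end Rescaling

section Gaussian

variable {n : ℕ}

lemma integrable_eval_pi_gaussianReal (i : Fin n) :
    Integrable (fun ξ : Fin n → ℝ => ξ i) (Measure.pi fun _ : Fin n => gaussianReal 0 1) :=
  integrable_eval ((memLp_id_gaussianReal 1).integrable le_rfl)

lemma integral_eval_pi_gaussianReal (i : Fin n) :
    ∫ ξ, ξ i ∂(Measure.pi fun _ : Fin n => gaussianReal 0 1) = 0 := by
  rw [integral_eval, integral_id_gaussianReal]

lemma gaussWidth_eq_inv_mul_integral_supportFun (G : Set (Fin n → ℝ)) :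
    gaussWidth n G
      = (n : ℝ)⁻¹ * ∫ ξ, supportFun G ξ ∂(Measure.pi fun _ : Fin n => gaussianReal 0 1) := by
  rw [gaussWidth, ← integral_const_mul]
  congr 1
  funext ξ
  rw [supportFun, ← smul_eq_mul, ← Real.sSup_smul_of_nonneg (by positivity), ← image_smul,
    image_image]
  rfl

end Gaussian

/-- For a convex class `F` and `f ∈ F`, the map `t ↦ W(B(f,t))/t` is nonincreasing
on `(0, ∞)`. -/
theorem gaussWidth_ratio_antitone (n : ℕ) (F : Set (Fin n → ℝ))
    (hF : Convex ℝ F) (f : Fin n → ℝ) (hf : f ∈ F)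
    (s t : ℝ) (hs : 0 < s) (hst : s ≤ t) :
    gaussWidth n (empBall n F f t) / t ≤ gaussWidth n (empBall n F f s) / s := by
  rw [gaussWidth_eq_inv_mul_integral_supportFun, gaussWidth_eq_inv_mul_integral_supportFun,
    mul_div_assoc, mul_div_assoc]
  exact mul_le_mul_of_nonneg_left (integral_supportFun_empBall_div_le
    integrable_eval_pi_gaussianReal integral_eval_pi_gaussianReal hF hf hs hst) (by positivity)
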